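/- arXiv:1201.2891 — 2 statements merged into one kernel-verified Lean document; each statement's English description precedes it below -/
import Mathlib

section
/- ψ is differentiable on (0,q) and its derivative is given by ψ′(t) = E[Th′(√t Z + √(q−t) Z′)·Th′(√t Z + √(q−t) Z″)], where Th′(x) = β/cosh²(h + βx). Equivalently, ψ′(t) = ∫ [∫ Th′(√t x + √(q−t) y) φ(dy)]² φ(dx) > 0, where φ is the standard Gaussian measure on ℝ. -/
open MeasureTheory ProbabilityTheory

noncomputable def stdG : Measure ℝ := ProbabilityTheory.gaussianReal 0 1

/-- Th'(x) = β / cosh²(h + βx), the derivative of x ↦ tanh(h + βx). -/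
noncomputable def Th' (h β x : ℝ) : ℝ := β / (Real.cosh (h + β * x)) ^ 2

/-!
Write `f = tanh (h + β ·)` and `g_t(z) = E f(√t z + √(q - t) Z')`, so that `ψ(t) = E[g_t(Z)²]`
(`gaussAvg`, `gaussCorr`). Differentiating `g_t(z)` in `t` under the integral and integrating
by parts in `Z'` (Stein's lemma `E[Z φ(Z)] = E[φ'(Z)]`) gives
`∂ₜ g_t(z) = z/(2√t) · E f'(…) - E f''(…)/2`. Hence `ψ'(t) = E[2 g_t(Z) ∂ₜ g_t(Z)]`, and a second
integration by parts, now in `Z` applied to `g_t · E f'(…)`, whose `z`-derivative is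
`√t ((E f'(…))² + g_t · E f''(…))`, cancels the `f''` terms and leaves `ψ'(t) = E[(E f'(…))²]`,
which is positive because `f' > 0`.
-/

open Real Filter Set Topology

instance : IsProbabilityMeasure stdG := by
  unfold stdG; infer_instance

lemma measurable_of_forall_hasDerivAt {f f' : ℝ → ℝ} (hf : ∀ x, HasDerivAt f (f' x) x) :
    Measurable f :=
  (Differentiable.continuous fun x => (hf x).differentiableAt).measurable

lemma measurable_deriv_of_forall_hasDerivAt {f f' : ℝ → ℝ} (hf : ∀ x, HasDerivAt f (f' x) x) :
    Measurable f' := by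
  rw [show f' = deriv f from funext fun x => (hf x).deriv.symm]
  exact measurable_deriv f

lemma integral_integral_mul_self {α : Type*} [MeasurableSpace α] (μ : Measure α) (k : α → ℝ) :
    ∫ y, ∫ y', k y * k y' ∂μ ∂μ = (∫ y, k y ∂μ) ^ 2 := by
  simp_rw [integral_const_mul, integral_mul_const, sq]

lemma integral_pos_of_forall_pos {α : Type*} [MeasurableSpace α] {μ : Measure α} [NeZero μ]
    {f : α → ℝ} (hf : Integrable f μ) (hpos : ∀ x, 0 < f x) : 0 < ∫ x, f x ∂μ := by
  rw [integral_pos_iff_support_of_nonneg (fun x => (hpos x).le) hf,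
    Set.eq_univ_of_forall fun x => Function.mem_support.mpr (hpos x).ne']
  exact Measure.measure_univ_pos.mpr (NeZero.ne μ)

lemma integrable_abs_stdG : Integrable (fun x => |x|) stdG :=
  ((memLp_id_gaussianReal 1).integrable le_rfl).abs

lemma norm_integral_stdG_le {f : ℝ → ℝ} {C : ℝ} (hC : ∀ x, ‖f x‖ ≤ C) :
    ‖∫ x, f x ∂stdG‖ ≤ C :=
  (norm_integral_le_of_norm_le_const (ae_of_all _ hC)).trans_eq (by simp)

lemma integrable_stdG_of_norm_le_linear {f : ℝ → ℝ} (hf : Measurable f) {c d : ℝ}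
    (hbound : ∀ x, ‖f x‖ ≤ c * |x| + d) : Integrable f stdG :=
  ((integrable_abs_stdG.const_mul c).add (integrable_const d)).mono' hf.aestronglyMeasurable
    (ae_of_all _ hbound)

lemma integral_stdG_eq_integral_gaussianPDFReal_mul (f : ℝ → ℝ) :
    ∫ x, f x ∂stdG = ∫ x, gaussianPDFReal 0 1 x * f x :=
  integral_gaussianReal_eq_integral_smul one_ne_zero

lemma gaussianPDFReal_zero_one :
    gaussianPDFReal 0 1 = fun x => (√(2 * π))⁻¹ * rexp (-(x ^ 2 / 2)) := by
  ext x; simp [gaussianPDFReal_def, neg_div]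

lemma hasDerivAt_gaussianPDFReal_zero_one (x : ℝ) :
    HasDerivAt (gaussianPDFReal 0 1) (-x * gaussianPDFReal 0 1 x) x := by
  have hexp : HasDerivAt (fun y : ℝ => -(y ^ 2 / 2)) (-x) x := by
    simpa using ((hasDerivAt_pow 2 x).div_const 2).fun_neg
  rw [gaussianPDFReal_zero_one]
  exact (hexp.exp.const_mul _).congr_deriv (by ring)

lemma integrable_mul_gaussianPDFReal_zero_one :
    Integrable fun x => x * gaussianPDFReal 0 1 x := by
  convert (integrable_mul_exp_neg_mul_sq (b := 1 / 2) (by norm_num)).const_mul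
    (√(2 * π))⁻¹ using 2 with x
  rw [gaussianPDFReal_zero_one]
  ring_nf

/-- Gaussian integration by parts (Stein's lemma). -/
theorem integral_mul_stdG_eq_integral_deriv {f f' : ℝ → ℝ} (hf : ∀ x, HasDerivAt f (f' x) x)
    {C C' : ℝ} (hC : ∀ x, ‖f x‖ ≤ C) (hC' : ∀ x, ‖f' x‖ ≤ C') :
    ∫ x, x * f x ∂stdG = ∫ x, f' x ∂stdG := by
  set p := gaussianPDFReal 0 1
  have hp0 : ∀ x, 0 ≤ p x := gaussianPDFReal_nonneg 0 1
  have hpm : Measurable p := measurable_gaussianPDFReal 0 1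
  have hfm : Measurable f := measurable_of_forall_hasDerivAt hf
  have integrable_mul_p {g : ℝ → ℝ} (hg : Measurable g) {B : ℝ} (hB : ∀ x, ‖g x‖ ≤ B) :
      Integrable fun x => p x * g x :=
    ((integrable_gaussianPDFReal 0 1).const_mul B).mono' (hpm.mul hg).aestronglyMeasurable
      (ae_of_all _ fun x => by
        rw [norm_mul, Real.norm_of_nonneg (hp0 x), mul_comm]
        exact mul_le_mul_of_nonneg_right (hB x) (hp0 x))
  have int_pf := integrable_mul_p hfm hC
  have int_pf' := integrable_mul_p (measurable_deriv_of_forall_hasDerivAt hf) hC'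
  have int_xpf : Integrable fun x => p x * (x * f x) :=
    (integrable_mul_gaussianPDFReal_zero_one.norm.const_mul C).mono'
      (hpm.mul (measurable_id.mul hfm)).aestronglyMeasurable
      (ae_of_all _ fun x => by
        rw [norm_mul, norm_mul, norm_mul, Real.norm_of_nonneg (hp0 x)]
        nlinarith [hC x, norm_nonneg x, hp0 x, mul_nonneg (norm_nonneg x) (hp0 x)])
  -- `∫ (p f)' = 0` because `p f` and `(p f)' = p f' - x p f` are integrable
  have hzero := integral_eq_zero_of_hasDerivAt_of_integrable
    (fun x => (hasDerivAt_gaussianPDFReal_zero_one x).mul (hf x))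
    ((int_pf'.sub int_xpf).congr (ae_of_all _ fun x => by simp only [Pi.sub_apply]; ring)) int_pf
  have hsub : (∫ x, p x * f' x) - ∫ x, p x * (x * f x) = 0 := by
    rw [← integral_sub int_pf' int_xpf, ← hzero]
    exact integral_congr_ae (ae_of_all _ fun x => by ring)
  rw [integral_stdG_eq_integral_gaussianPDFReal_mul, integral_stdG_eq_integral_gaussianPDFReal_mul]
  linarith

lemma hasDerivAt_integral_stdG_of_norm_le_linear {F F' : ℝ → ℝ → ℝ} {t c d : ℝ} {U : Set ℝ}
    (hU : U ∈ 𝓝 t) (hFm : ∀ s, Measurable (F s)) (hFi : Integrable (F t) stdG)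
    (hF'm : Measurable (F' t)) (hF' : ∀ y, ∀ s ∈ U, HasDerivAt (F · y) (F' s y) s)
    (hbound : ∀ y, ∀ s ∈ U, ‖F' s y‖ ≤ c * |y| + d) :
    HasDerivAt (fun s => ∫ y, F s y ∂stdG) (∫ y, F' t y ∂stdG) t :=
  (hasDerivAt_integral_of_dominated_loc_of_deriv_le hU
    (Eventually.of_forall fun s => (hFm s).aestronglyMeasurable) hFi hF'm.aestronglyMeasurable
    (ae_of_all _ hbound) ((integrable_abs_stdG.const_mul c).add (integrable_const d))
    (ae_of_all _ hF')).2

noncomputable def gaussAvg (f : ℝ → ℝ) (a b z : ℝ) : ℝ := ∫ y, f (a * z + b * y) ∂stdG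

@[fun_prop]
lemma measurable_gaussAvg {f : ℝ → ℝ} (hf : Measurable f) (a b : ℝ) :
    Measurable (gaussAvg f a b) :=
  (StronglyMeasurable.integral_prod_right (f := fun z y => f (a * z + b * y))
    (hf.comp (by fun_prop)).stronglyMeasurable).measurable

lemma norm_gaussAvg_le {f : ℝ → ℝ} {C : ℝ} (hC : ∀ x, ‖f x‖ ≤ C) (a b z : ℝ) :
    ‖gaussAvg f a b z‖ ≤ C :=
  norm_integral_stdG_le fun _ => hC _

lemma integrable_comp_affine_stdG {f : ℝ → ℝ} (hf : Measurable f) {C : ℝ}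
    (hC : ∀ x, ‖f x‖ ≤ C) (a b : ℝ) : Integrable (fun y => f (a + b * y)) stdG :=
  .of_bound (hf.comp (by fun_prop)).aestronglyMeasurable C (ae_of_all _ fun _ => hC _)

lemma hasDerivAt_gaussAvg {f f' : ℝ → ℝ} (hf : ∀ x, HasDerivAt f (f' x) x) {C C' : ℝ}
    (hC : ∀ x, ‖f x‖ ≤ C) (hC' : ∀ x, ‖f' x‖ ≤ C') (a b z : ℝ) :
    HasDerivAt (gaussAvg f a b) (a * gaussAvg f' a b z) z := by
  have hfm : Measurable f := measurable_of_forall_hasDerivAt hf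
  have h := hasDerivAt_integral_stdG_of_norm_le_linear (F := fun z y => f (a * z + b * y))
    (F' := fun z y => a * f' (a * z + b * y)) (t := z) (c := 0) (d := |a| * C') univ_mem
    (fun z => hfm.comp (by fun_prop)) (integrable_comp_affine_stdG hfm hC _ _)
    (measurable_const.mul ((measurable_deriv_of_forall_hasDerivAt hf).comp (by fun_prop)))
    (fun y s _ => ((hf _).comp s (((hasDerivAt_id s).const_mul a).add_const _)).congr_deriv
      (by simp [mul_comm]))
    (fun y s _ => by
      rw [norm_mul, Real.norm_eq_abs, zero_mul, zero_add]
      exact mul_le_mul_of_nonneg_left (hC' _) (abs_nonneg a))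
  rwa [integral_const_mul] at h

lemma integral_mul_comp_affine_stdG {f f' : ℝ → ℝ} (hf : ∀ x, HasDerivAt f (f' x) x) {C C' : ℝ}
    (hC : ∀ x, ‖f x‖ ≤ C) (hC' : ∀ x, ‖f' x‖ ≤ C') (a b : ℝ) :
    ∫ y, y * f (a + b * y) ∂stdG = b * ∫ y, f' (a + b * y) ∂stdG := by
  rw [← integral_const_mul]
  refine integral_mul_stdG_eq_integral_deriv (C := C) (C' := |b| * C')
    (fun y => ((hf _).comp y (((hasDerivAt_id y).const_mul b).const_add a)).congr_deriv
      (by simp [mul_comm])) (fun _ => hC _) (fun y => ?_)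
  rw [norm_mul, Real.norm_eq_abs]
  exact mul_le_mul_of_nonneg_left (hC' _) (abs_nonneg b)

lemma hasDerivAt_sqrt_interp {q s : ℝ} (hs : s ∈ Ioo 0 q) (z y : ℝ) :
    HasDerivAt (fun s => √s * z + √(q - s) * y) (z / (2 * √s) - y / (2 * √(q - s))) s := by
  have hsq := (Real.hasDerivAt_sqrt (sub_pos.mpr hs.2).ne').comp s ((hasDerivAt_id s).const_sub q)
  refine (((Real.hasDerivAt_sqrt hs.1.ne').mul_const z).add (hsq.mul_const y)).congr_deriv ?_
  ring

lemma hasDerivAt_gaussAvg_sqrt {f f' f'' : ℝ → ℝ} (hf : ∀ x, HasDerivAt f (f' x) x)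
    (hf' : ∀ x, HasDerivAt f' (f'' x) x) {C C' C'' : ℝ} (hC : ∀ x, ‖f x‖ ≤ C)
    (hC' : ∀ x, ‖f' x‖ ≤ C') (hC'' : ∀ x, ‖f'' x‖ ≤ C'') {q t : ℝ} (ht : t ∈ Ioo 0 q) (z : ℝ) :
    HasDerivAt (fun s => gaussAvg f (√s) (√(q - s)) z)
      (z / (2 * √t) * gaussAvg f' (√t) (√(q - t)) z - gaussAvg f'' (√t) (√(q - t)) z / 2) t := by
  obtain ⟨ht0, htq⟩ := ht
  have hfm : Measurable f := measurable_of_forall_hasDerivAt hf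
  have hf'm := measurable_deriv_of_forall_hasDerivAt hf
  have hC'0 : 0 ≤ C' := (norm_nonneg _).trans (hC' 0)
  have h := hasDerivAt_integral_stdG_of_norm_le_linear (t := t) (U := Ioo (t / 2) ((t + q) / 2))
    (F := fun s y => f (√s * z + √(q - s) * y))
    (F' := fun s y => (z / (2 * √s) - y / (2 * √(q - s))) * f' (√s * z + √(q - s) * y))
    (c := C' / (2 * √((q - t) / 2))) (d := |z| / (2 * √(t / 2)) * C')
    (Ioo_mem_nhds (by linarith) (by linarith))
    (fun s => hfm.comp (by fun_prop)) (integrable_comp_affine_stdG hfm hC _ _)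
    (by fun_prop) (fun y s hs => ?_) (fun y s hs => ?_)
  · set a := √t
    set b := √(q - t)
    have hb : 0 < b := Real.sqrt_pos.mpr (sub_pos.mpr htq)
    have hint := integrable_comp_affine_stdG hf'm hC' (a * z) b
    have hint_mul : Integrable (fun y => y * f' (a * z + b * y)) stdG :=
      integrable_stdG_of_norm_le_linear (c := C') (d := 0) (by fun_prop) fun y => by
        rw [norm_mul, Real.norm_eq_abs, add_zero, mul_comm C']
        exact mul_le_mul_of_nonneg_left (hC' _) (abs_nonneg y)
    refine h.congr_deriv (Eq.symm ?_)
    calc z / (2 * a) * gaussAvg f' a b z - gaussAvg f'' a b z / 2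
        = z / (2 * a) * ∫ y, f' (a * z + b * y) ∂stdG
          - (2 * b)⁻¹ * ∫ y, y * f' (a * z + b * y) ∂stdG := by
          rw [integral_mul_comp_affine_stdG hf' hC' hC'' (a * z) b, gaussAvg, gaussAvg]
          field_simp
      _ = _ := by
          rw [← integral_const_mul, ← integral_const_mul,
            ← integral_sub (hint.const_mul _) (hint_mul.const_mul _)]
          exact integral_congr_ae (ae_of_all _ fun y => by ring)
  · exact (hf _).comp s (hasDerivAt_sqrt_interp ⟨by linarith [hs.1], by linarith [hs.2]⟩ z y)
      |>.congr_deriv (mul_comm _ _)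
  · obtain ⟨hs1, hs2⟩ := hs
    have hs0 : 0 < s := by linarith
    have hqs : (q - t) / 2 ≤ q - s := by linarith
    have hqs0 : 0 < q - s := by linarith
    calc ‖(z / (2 * √s) - y / (2 * √(q - s))) * f' (√s * z + √(q - s) * y)‖
        ≤ (|z| / (2 * √s) + |y| / (2 * √(q - s))) * C' := by
          rw [norm_mul, Real.norm_eq_abs]
          refine mul_le_mul ((abs_sub _ _).trans_eq ?_) (hC' _) (norm_nonneg _) (by positivity)
          rw [abs_div, abs_div, abs_of_pos (by positivity : 0 < 2 * √s),
            abs_of_pos (by positivity : 0 < 2 * √(q - s))]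
      _ ≤ (|z| / (2 * √(t / 2)) + |y| / (2 * √((q - t) / 2))) * C' := by gcongr
      _ = _ := by ring

lemma integrable_gaussAvg_sq {f : ℝ → ℝ} (hf : Measurable f) {C : ℝ} (hC : ∀ x, ‖f x‖ ≤ C)
    (a b : ℝ) : Integrable (fun z => gaussAvg f a b z ^ 2) stdG :=
  .of_bound ((measurable_gaussAvg hf a b).pow_const 2).aestronglyMeasurable (C * C)
    (ae_of_all _ fun z => by
      rw [sq]; exact norm_mul_le_of_le (norm_gaussAvg_le hC a b z) (norm_gaussAvg_le hC a b z))

lemma integral_two_mul_gaussAvg_mul_sub_eq_integral_sq {f f' f'' : ℝ → ℝ}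
    (hf : ∀ x, HasDerivAt f (f' x) x) (hf' : ∀ x, HasDerivAt f' (f'' x) x) {C C' C'' : ℝ}
    (hC : ∀ x, ‖f x‖ ≤ C) (hC' : ∀ x, ‖f' x‖ ≤ C') (hC'' : ∀ x, ‖f'' x‖ ≤ C'')
    {a : ℝ} (ha : a ≠ 0) (b : ℝ) :
    ∫ z, 2 * gaussAvg f a b z * (z / (2 * a) * gaussAvg f' a b z - gaussAvg f'' a b z / 2) ∂stdG
      = ∫ z, gaussAvg f' a b z ^ 2 ∂stdG := by
  set g := gaussAvg f a b
  set G₁ := gaussAvg f' a b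
  set G₂ := gaussAvg f'' a b
  have hgm : Measurable g := measurable_gaussAvg (measurable_of_forall_hasDerivAt hf) a b
  have hG₁m : Measurable G₁ := measurable_gaussAvg (measurable_deriv_of_forall_hasDerivAt hf) a b
  have hG₂m : Measurable G₂ := measurable_gaussAvg (measurable_deriv_of_forall_hasDerivAt hf') a b
  have hg := norm_gaussAvg_le hC a b
  have hG₁ := norm_gaussAvg_le hC' a b
  have hG₂ := norm_gaussAvg_le hC'' a b
  have hstein : ∫ z, z * (g z * G₁ z) ∂stdG = a * ∫ z, (G₁ z ^ 2 + g z * G₂ z) ∂stdG := by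
    rw [← integral_const_mul]
    refine integral_mul_stdG_eq_integral_deriv (C := C * C') (C' := |a| * (C' * C' + C * C''))
      (fun z => ((hasDerivAt_gaussAvg hf hC hC' a b z).mul
        (hasDerivAt_gaussAvg hf' hC' hC'' a b z)).congr_deriv (by ring))
      (fun z => norm_mul_le_of_le (hg z) (hG₁ z)) (fun z => ?_)
    rw [norm_mul, Real.norm_eq_abs, sq]
    exact mul_le_mul_of_nonneg_left ((norm_add_le _ _).trans (add_le_add
      (norm_mul_le_of_le (hG₁ z) (hG₁ z)) (norm_mul_le_of_le (hg z) (hG₂ z)))) (abs_nonneg a)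
  have hint_zgG₁ : Integrable (fun z => z * (g z * G₁ z)) stdG :=
    integrable_stdG_of_norm_le_linear (c := C * C') (d := 0) (by fun_prop) fun z => by
      rw [norm_mul, Real.norm_eq_abs, add_zero, mul_comm _ |z|]
      exact mul_le_mul_of_nonneg_left (norm_mul_le_of_le (hg z) (hG₁ z)) (abs_nonneg z)
  have hint_G₁sq := integrable_gaussAvg_sq (measurable_deriv_of_forall_hasDerivAt hf) hC' a b
  have hint_gG₂ : Integrable (fun z => g z * G₂ z) stdG :=
    .of_bound (by fun_prop) (C * C'') (ae_of_all _ fun z => norm_mul_le_of_le (hg z) (hG₂ z))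
  calc ∫ z, 2 * g z * (z / (2 * a) * G₁ z - G₂ z / 2) ∂stdG
      = ∫ z, (a⁻¹ * (z * (g z * G₁ z)) - g z * G₂ z) ∂stdG :=
        integral_congr_ae (ae_of_all _ fun z => by field_simp)
    _ = a⁻¹ * (a * ((∫ z, G₁ z ^ 2 ∂stdG) + ∫ z, g z * G₂ z ∂stdG))
          - ∫ z, g z * G₂ z ∂stdG := by
        rw [integral_sub (hint_zgG₁.const_mul _) hint_gG₂, integral_const_mul, hstein,
          integral_add hint_G₁sq hint_gG₂]
    _ = ∫ z, G₁ z ^ 2 ∂stdG := by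
        field_simp
        ring

noncomputable def gaussCorr (f : ℝ → ℝ) (q t : ℝ) : ℝ :=
  ∫ z, gaussAvg f (√t) (√(q - t)) z ^ 2 ∂stdG

lemma gaussCorr_pos {f : ℝ → ℝ} (hf : Measurable f) {C : ℝ} (hC : ∀ x, ‖f x‖ ≤ C)
    (hpos : ∀ x, 0 < f x) (q t : ℝ) : 0 < gaussCorr f q t :=
  integral_pos_of_forall_pos (integrable_gaussAvg_sq hf hC _ _) fun _ =>
    pow_pos (integral_pos_of_forall_pos (integrable_comp_affine_stdG hf hC _ _) fun _ => hpos _) 2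

lemma norm_sub_gaussAvg_sqrt_le {f' f'' : ℝ → ℝ} {C' C'' : ℝ} (hC' : ∀ x, ‖f' x‖ ≤ C')
    (hC'' : ∀ x, ‖f'' x‖ ≤ C'') {u s : ℝ} (hu : 0 < u) (hus : u ≤ s) (b z : ℝ) :
    ‖z / (2 * √s) * gaussAvg f' (√s) b z - gaussAvg f'' (√s) b z / 2‖
      ≤ |z| / (2 * √u) * C' + C'' / 2 := by
  have hC'0 : 0 ≤ C' := (norm_nonneg _).trans (hC' 0)
  have hs : 0 < s := hu.trans_le hus
  refine (norm_sub_le _ _).trans (add_le_add ?_ ?_)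
  · rw [norm_mul, Real.norm_eq_abs, abs_div, abs_of_pos (by positivity : 0 < 2 * √s)]
    gcongr
    exact norm_gaussAvg_le hC' _ _ z
  · rw [norm_div, Real.norm_two]
    gcongr
    exact norm_gaussAvg_le hC'' _ _ z

theorem hasDerivAt_gaussCorr {f f' f'' : ℝ → ℝ}
    (hf : ∀ x, HasDerivAt f (f' x) x) (hf' : ∀ x, HasDerivAt f' (f'' x) x) {C C' C'' : ℝ}
    (hC : ∀ x, ‖f x‖ ≤ C) (hC' : ∀ x, ‖f' x‖ ≤ C') (hC'' : ∀ x, ‖f'' x‖ ≤ C'')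
    {q t : ℝ} (ht : t ∈ Ioo 0 q) :
    HasDerivAt (gaussCorr f q) (gaussCorr f' q t) t := by
  obtain ⟨ht0, htq⟩ := ht
  have hfm : Measurable f := measurable_of_forall_hasDerivAt hf
  have hf'm := measurable_deriv_of_forall_hasDerivAt hf
  have hf''m := measurable_deriv_of_forall_hasDerivAt hf'
  have h := hasDerivAt_integral_stdG_of_norm_le_linear (t := t) (U := Ioo (t / 2) ((t + q) / 2))
    (F := fun s z => gaussAvg f (√s) (√(q - s)) z ^ 2)
    (F' := fun s z => 2 * gaussAvg f (√s) (√(q - s)) z *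
      (z / (2 * √s) * gaussAvg f' (√s) (√(q - s)) z - gaussAvg f'' (√s) (√(q - s)) z / 2))
    (c := C * C' / √(t / 2)) (d := C * C'')
    (Ioo_mem_nhds (by linarith) (by linarith))
    (fun s => (measurable_gaussAvg hfm _ _).pow_const 2)
    (integrable_gaussAvg_sq hfm hC _ _)
    (by fun_prop)
    (fun z s hs => ((hasDerivAt_gaussAvg_sqrt hf hf' hC hC' hC''
      ⟨by linarith [hs.1], by linarith [hs.2]⟩ z).pow 2).congr_deriv (by ring))
    (fun z s hs => ?_)
  · rwa [integral_two_mul_gaussAvg_mul_sub_eq_integral_sq hf hf' hC hC' hC''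
      (Real.sqrt_pos.mpr ht0).ne'] at h
  · have hg := norm_gaussAvg_le hC (√s) (√(q - s)) z
    calc ‖2 * gaussAvg f (√s) (√(q - s)) z *
          (z / (2 * √s) * gaussAvg f' (√s) (√(q - s)) z - gaussAvg f'' (√s) (√(q - s)) z / 2)‖
        ≤ 2 * C * (|z| / (2 * √(t / 2)) * C' + C'' / 2) :=
          norm_mul_le_of_le (norm_mul_le_of_le (by simp) hg)
            (norm_sub_gaussAvg_sqrt_le hC' hC'' (by linarith) hs.1.le _ z)
      _ = C * C' / √(t / 2) * |z| + C * C'' := by field_simp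

lemma hasDerivAt_tanh (x : ℝ) : HasDerivAt tanh (cosh x ^ 2)⁻¹ x := by
  have hcosh := (cosh_pos x).ne'
  rw [show tanh = fun y => sinh y / cosh y from funext tanh_eq_sinh_div_cosh]
  refine ((hasDerivAt_sinh x).div (hasDerivAt_cosh x) hcosh).congr_deriv ?_
  rw [inv_eq_one_div, ← cosh_sq_sub_sinh_sq x]
  ring

lemma one_le_cosh_sq (x : ℝ) : 1 ≤ cosh x ^ 2 := one_le_pow₀ (one_le_cosh x)

noncomputable def Th (h β x : ℝ) : ℝ := tanh (h + β * x)

noncomputable def Th'' (h β x : ℝ) : ℝ := -2 * β ^ 2 * tanh (h + β * x) / cosh (h + β * x) ^ 2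

section

variable (h β : ℝ)

lemma hasDerivAt_Th (x : ℝ) : HasDerivAt (Th h β) (Th' h β x) x :=
  ((hasDerivAt_tanh _).comp x (((hasDerivAt_id x).const_mul β).const_add h)).congr_deriv
    (by simp [Th', div_eq_mul_inv, mul_comm])

lemma hasDerivAt_Th' (x : ℝ) : HasDerivAt (Th' h β) (Th'' h β x) x := by
  have hcosh := (cosh_pos (h + β * x)).ne'
  have hcosh_sq : HasDerivAt (fun y => cosh (h + β * y) ^ 2)
      (2 * cosh (h + β * x) * (sinh (h + β * x) * β)) x := by
    simpa using ((hasDerivAt_cosh _).comp x (((hasDerivAt_id x).const_mul β).const_add h)).fun_pow 2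
  refine ((hcosh_sq.fun_inv (by positivity)).const_mul β).congr_deriv ?_
  simp only [Th'', tanh_eq_sinh_div_cosh]
  field_simp

lemma norm_Th_le (x : ℝ) : ‖Th h β x‖ ≤ 1 := (abs_tanh_lt_one _).le

lemma norm_Th'_le (x : ℝ) : ‖Th' h β x‖ ≤ |β| := by
  rw [Th', norm_div, norm_pow, Real.norm_eq_abs, Real.norm_of_nonneg (cosh_pos _).le]
  exact div_le_self (abs_nonneg β) (one_le_cosh_sq _)

lemma norm_Th''_le (x : ℝ) : ‖Th'' h β x‖ ≤ 2 * β ^ 2 := by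
  rw [Th'', norm_div, norm_pow, norm_mul, Real.norm_of_nonneg (cosh_pos _).le]
  refine div_le_of_le_mul₀ (by positivity) (by positivity) ?_
  calc ‖-2 * β ^ 2‖ * ‖tanh (h + β * x)‖ ≤ 2 * β ^ 2 * 1 := by
        rw [norm_mul, norm_neg, Real.norm_two, norm_pow, Real.norm_eq_abs, sq_abs]
        gcongr
        exact norm_Th_le h β x
    _ ≤ 2 * β ^ 2 * cosh (h + β * x) ^ 2 := by
        gcongr
        exact one_le_cosh_sq _

lemma Th'_pos (hβ : 0 < β) (x : ℝ) : 0 < Th' h β x := by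
  unfold Th'; positivity

end

theorem psi_derivative_general
    (h β q : ℝ) (hβ : 0 < β)
    (ψ : ℝ → ℝ)
    (hψ : ∀ t : ℝ, ψ t =
      ∫ z, (∫ z', (∫ z'',
        Real.tanh (h + β * (Real.sqrt t * z + Real.sqrt (q - t) * z')) *
        Real.tanh (h + β * (Real.sqrt t * z + Real.sqrt (q - t) * z''))
        ∂stdG) ∂stdG) ∂stdG) :
    ∀ t ∈ Set.Ioo (0 : ℝ) q,
      HasDerivAt ψ
        (∫ z, (∫ z', (∫ z'',
          Th' h β (Real.sqrt t * z + Real.sqrt (q - t) * z') *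
          Th' h β (Real.sqrt t * z + Real.sqrt (q - t) * z'')
          ∂stdG) ∂stdG) ∂stdG) t ∧
      (∫ z, (∫ z', (∫ z'',
          Th' h β (Real.sqrt t * z + Real.sqrt (q - t) * z') *
          Th' h β (Real.sqrt t * z + Real.sqrt (q - t) * z'')
          ∂stdG) ∂stdG) ∂stdG)
        = ∫ x, (∫ y, Th' h β (Real.sqrt t * x + Real.sqrt (q - t) * y) ∂stdG) ^ 2 ∂stdG ∧
      0 < ∫ x, (∫ y, Th' h β (Real.sqrt t * x + Real.sqrt (q - t) * y) ∂stdG) ^ 2 ∂stdG := by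
  intro t ht
  have hψ_eq : ψ = gaussCorr (Th h β) q := funext fun s =>
    (hψ s).trans (integral_congr_ae (ae_of_all _ fun _ => integral_integral_mul_self stdG _))
  have hcorr : ∫ z, ∫ z', ∫ z'',
      Th' h β (√t * z + √(q - t) * z') * Th' h β (√t * z + √(q - t) * z'') ∂stdG ∂stdG ∂stdG
      = gaussCorr (Th' h β) q t :=
    integral_congr_ae (ae_of_all _ fun _ => integral_integral_mul_self stdG _)
  refine ⟨?_, hcorr, gaussCorr_pos (measurable_deriv_of_forall_hasDerivAt (hasDerivAt_Th h β))
    (norm_Th'_le h β) (Th'_pos h β hβ) q t⟩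
  rw [hψ_eq, hcorr]
  exact hasDerivAt_gaussCorr (hasDerivAt_Th h β) (hasDerivAt_Th' h β) (norm_Th_le h β)
    (norm_Th'_le h β) (norm_Th''_le h β) ht

/-- ψ is differentiable on (0,q) with
ψ′(t) = E[Th′(√t Z + √(q−t) Z′)·Th′(√t Z + √(q−t) Z″)], which equals
∫ [∫ Th′(√t x + √(q−t) y) φ(dy)]² φ(dx) > 0. -/
theorem psi_derivative
    (h β q : ℝ) (hh : 0 < h) (hβ : 0 < β) (hq0 : 0 < q) (hq1 : q < 1)
    (hq : q = ∫ z, Real.tanh (h + β * (Real.sqrt q * z)) ^ 2 ∂stdG)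
    (ψ : ℝ → ℝ)
    (hψ : ∀ t : ℝ, ψ t =
      ∫ z, (∫ z', (∫ z'',
        Real.tanh (h + β * (Real.sqrt t * z + Real.sqrt (q - t) * z')) *
        Real.tanh (h + β * (Real.sqrt t * z + Real.sqrt (q - t) * z''))
        ∂stdG) ∂stdG) ∂stdG) :
    ∀ t ∈ Set.Ioo (0 : ℝ) q,
      HasDerivAt ψ
        (∫ z, (∫ z', (∫ z'',
          Th' h β (Real.sqrt t * z + Real.sqrt (q - t) * z') *
          Th' h β (Real.sqrt t * z + Real.sqrt (q - t) * z'')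
          ∂stdG) ∂stdG) ∂stdG) t ∧
      (∫ z, (∫ z', (∫ z'',
          Th' h β (Real.sqrt t * z + Real.sqrt (q - t) * z') *
          Th' h β (Real.sqrt t * z + Real.sqrt (q - t) * z'')
          ∂stdG) ∂stdG) ∂stdG)
        = ∫ x, (∫ y, Th' h β (Real.sqrt t * x + Real.sqrt (q - t) * y) ∂stdG) ^ 2 ∂stdG ∧
      0 < ∫ x, (∫ y, Th' h β (Real.sqrt t * x + Real.sqrt (q - t) * y) ∂stdG) ^ 2 ∂stdG :=
  psi_derivative_general h β q hβ ψ hψ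
end

section
/- Let c > 0. Then there exist constants K, C > 0 depending only on c such that the following holds: for every N and every centered jointly Gaussian random vector ζ = (ζ₁,…,ζ_N) with E[ζᵢ²] ≤ c for all i and N·|E[ζᵢζⱼ]| ≤ c for all i ≠ j, one has P( N⁻¹ Σᵢ₌₁^N |ζᵢ| ≥ K ) ≤ C·exp(−N/C). -/
/-!
Writing `N⁻¹ ∑ |ζᵢ|` as the largest of the signed means `N⁻¹ ∑ εᵢ ζᵢ` over sign vectors `ε`, it
suffices to bound each signed mean and take a union bound over the `3 ^ N` vectors
`ε : Fin N → SignType`. Each `∑ εᵢ ζᵢ` is a centred Gaussian whose variance is at most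
`N · c + N² · (c / N) = 2 N c`, so by the Gaussian Chernoff bound it exceeds `N K` with probability
at most `exp (-N K² / (4 c))`. With `K² = 4 c (log 3 + 1)` the union bound gives `exp (-N)`.
-/

open MeasureTheory ProbabilityTheory
open scoped NNReal

variable {Ω : Type*} {mΩ : MeasurableSpace Ω}

def IsCenteredGaussianVector {ι : Type*} [Fintype ι] (ζ : Ω → ι → ℝ) (μ : Measure Ω) : Prop :=
  ∀ a : ι → ℝ, ∃ v : ℝ≥0, μ.map (fun ω ↦ ∑ i, a i * ζ ω i) = gaussianReal 0 v

variable {μ : Measure Ω}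

lemma hasSubgaussianMGF_id_gaussianReal_of_le {v s : ℝ≥0} (hvs : v ≤ s) :
    HasSubgaussianMGF id s (gaussianReal 0 v) where
  integrable_exp_mul t := integrable_exp_mul_gaussianReal t
  mgf_le t := by
    simp only [mgf_id_gaussianReal, zero_mul, zero_add]
    gcongr

lemma HasSubgaussianMGF.of_map_eq_gaussianReal {X : Ω → ℝ} {v s : ℝ≥0}
    (hX : μ.map X = gaussianReal 0 v) (hvs : v ≤ s) : HasSubgaussianMGF X s μ :=
  (HasSubgaussianMGF.id_map_iff (aemeasurable_of_map_neZero (by rw [hX]; infer_instance))).1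
    (hX ▸ hasSubgaussianMGF_id_gaussianReal_of_le hvs)

lemma integral_sq_eq_of_map_eq_gaussianReal {X : Ω → ℝ} {v : ℝ≥0}
    (hX : μ.map X = gaussianReal 0 v) : ∫ ω, X ω ^ 2 ∂μ = v := by
  have hXm : AEMeasurable X μ := aemeasurable_of_map_neZero (by rw [hX]; infer_instance)
  rw [← integral_map (φ := X) (f := fun x ↦ x ^ 2) hXm (by fun_prop), hX,
    ← variance_of_integral_eq_zero (X := fun x ↦ x) aemeasurable_id' integral_id_gaussianReal,
    variance_fun_id_gaussianReal]

lemma integral_sq_sum_mul {ι : Type*} [Fintype ι] {X : ι → Ω → ℝ}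
    (hX : ∀ i, MemLp (X i) 2 μ) (a : ι → ℝ) :
    ∫ ω, (∑ i, a i * X i ω) ^ 2 ∂μ = ∑ i, ∑ j, a i * a j * ∫ ω, X i ω * X j ω ∂μ := by
  have hint : ∀ i j, Integrable (fun ω ↦ X i ω * X j ω) μ := fun i j ↦
    (hX i).integrable_mul (hX j)
  have hexpand : ∀ ω, (∑ i, a i * X i ω) ^ 2 = ∑ i, ∑ j, a i * a j * (X i ω * X j ω) := by
    intro ω
    rw [sq, Finset.sum_mul_sum]
    exact Finset.sum_congr rfl fun i _ ↦ Finset.sum_congr rfl fun j _ ↦ by ring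
  simp_rw [hexpand]
  rw [integral_finsetSum _ fun i _ ↦ integrable_finsetSum _ fun j _ ↦ (hint i j).const_mul _]
  refine Finset.sum_congr rfl fun i _ ↦ ?_
  rw [integral_finsetSum _ fun j _ ↦ (hint i j).const_mul _]
  simp_rw [integral_const_mul]

lemma sum_sum_mul_mul_le_of_abs_le {ι : Type*} [Fintype ι] [DecidableEq ι] (a : ι → ℝ)
    (M : ι → ι → ℝ) {b d : ℝ} (ha : ∀ i, |a i| ≤ 1)
    (hM : ∀ i j, |M i j| ≤ b + if i = j then d else 0) :
    ∑ i, ∑ j, a i * a j * M i j ≤ Fintype.card ι ^ 2 * b + Fintype.card ι * d := by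
  have hterm : ∀ i j, a i * a j * M i j ≤ b + if i = j then d else 0 := fun i j ↦
    calc a i * a j * M i j ≤ |a i| * |a j| * |M i j| := by
          rw [← abs_mul, ← abs_mul]; exact le_abs_self _
      _ ≤ 1 * 1 * (b + if i = j then d else 0) :=
          mul_le_mul (mul_le_mul (ha i) (ha j) (abs_nonneg _) zero_le_one) (hM i j)
            (abs_nonneg _) (by norm_num)
      _ = _ := by ring
  calc ∑ i, ∑ j, a i * a j * M i j ≤ ∑ i : ι, ∑ j : ι, (b + if i = j then d else 0) :=
        Finset.sum_le_sum fun i _ ↦ Finset.sum_le_sum fun j _ ↦ hterm i j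
    _ = _ := by
      simp only [Finset.sum_add_distrib, Finset.sum_const, Finset.card_univ, nsmul_eq_mul,
        Finset.sum_ite_eq, Finset.mem_univ, if_true]
      ring

lemma measureReal_le_sum_abs_le_sum_signs {ι : Type*} [Fintype ι] [DecidableEq ι]
    [IsFiniteMeasure μ] (X : ι → Ω → ℝ) (t : ℝ) :
    μ.real {ω | t ≤ ∑ i, |X i ω|} ≤ ∑ ε : ι → SignType, μ.real {ω | t ≤ ∑ i, ε i * X i ω} := by
  refine (measureReal_mono (s₂ := ⋃ ε : ι → SignType, {ω | t ≤ ∑ i, ε i * X i ω})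
    fun ω hω ↦ Set.mem_iUnion.2 ⟨fun i ↦ SignType.sign (X i ω), ?_⟩).trans
    (measureReal_iUnion_fintype_le _)
  simpa only [Set.mem_ofPred_eq, sign_mul_self] using hω

namespace IsCenteredGaussianVector

variable {ι : Type*} [Fintype ι] {ζ : Ω → ι → ℝ}

lemma memLp (h : IsCenteredGaussianVector ζ μ) (i : ι) (p : ℝ≥0) :
    MemLp (fun ω ↦ ζ ω i) p μ := by
  classical
  obtain ⟨v, hv⟩ := h (Pi.single i 1)
  simp only [Pi.single_apply, ite_mul, one_mul, zero_mul, Finset.sum_ite_eq',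
    Finset.mem_univ, if_true] at hv
  exact (HasSubgaussianMGF.of_map_eq_gaussianReal hv le_rfl).memLp p

lemma measureReal_le_sum_mul_le (h : IsCenteredGaussianVector ζ μ) (a : ι → ℝ) {s t : ℝ}
    (hs : ∫ ω, (∑ i, a i * ζ ω i) ^ 2 ∂μ ≤ s) (ht : 0 ≤ t) :
    μ.real {ω | t ≤ ∑ i, a i * ζ ω i} ≤ Real.exp (-t ^ 2 / (2 * s)) := by
  obtain ⟨v, hv⟩ := h a
  rw [integral_sq_eq_of_map_eq_gaussianReal hv] at hs
  have hvs : v ≤ s.toNNReal := by rwa [Real.le_toNNReal_iff_coe_le (v.2.trans hs)]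
  simpa [Real.coe_toNNReal _ (v.2.trans hs)] using
    (HasSubgaussianMGF.of_map_eq_gaussianReal hv hvs).measure_ge_le ht

end IsCenteredGaussianVector

/-- for every c > 0 there are K, C > 0 (depending only on c) such that
for every N and every centered jointly Gaussian vector ζ = (ζ₁,…,ζ_N) with
E[ζᵢ²] ≤ c and N·|E[ζᵢζⱼ]| ≤ c for i ≠ j, one has
P(N⁻¹ Σ|ζᵢ| ≥ K) ≤ C·exp(−N/C). -/
theorem gaussian_abs_mean_large_deviation (c : ℝ) (hc : 0 < c) :
    ∃ K C : ℝ, 0 < K ∧ 0 < C ∧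
      ∀ (Ω : Type) [MeasureSpace Ω], IsProbabilityMeasure (ℙ : Measure Ω) →
      ∀ (N : ℕ) (ζ : Ω → Fin N → ℝ),
        (∀ i : Fin N, Measurable fun ω => ζ ω i) →
        (∀ a : Fin N → ℝ, ∃ v : NNReal,
          Measure.map (fun ω => ∑ i, a i * ζ ω i) ℙ = gaussianReal 0 v) →
        (∀ i : Fin N, ∫ ω, (ζ ω i) ^ 2 ∂ℙ ≤ c) →
        (∀ i j : Fin N, i ≠ j → (N : ℝ) * |∫ ω, ζ ω i * ζ ω j ∂ℙ| ≤ c) →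
        ℙ {ω | K ≤ (N : ℝ)⁻¹ * ∑ i, |ζ ω i|} ≤
          ENNReal.ofReal (C * Real.exp (-(N : ℝ) / C)) := by
  set K := √(4 * c * (Real.log 3 + 1))
  have hK : K ^ 2 = 4 * c * (Real.log 3 + 1) := Real.sq_sqrt (by positivity)
  refine ⟨K, 1, by positivity, one_pos, ?_⟩
  intro Ω _ _ N ζ _ (hgauss : IsCenteredGaussianVector ζ ℙ) hvar hcov
  rcases N.eq_zero_or_pos with rfl | hN
  · simp [(show 0 < K by positivity).not_ge]
  have hN' : (0 : ℝ) < N := by exact_mod_cast hN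
  have hcorr : ∀ i j, |∫ ω, ζ ω i * ζ ω j| ≤ c / N + if i = j then c else 0 := by
    intro i j
    split_ifs with hij
    · subst hij
      simp_rw [← sq]
      rw [abs_of_nonneg (integral_nonneg fun ω ↦ sq_nonneg (ζ ω i))]
      linarith [hvar i, div_pos hc hN']
    · rw [add_zero, le_div_iff₀ hN', mul_comm]
      exact hcov i j hij
  have hsign : ∀ ε : Fin N → SignType, (ℙ : Measure Ω).real {ω | N * K ≤ ∑ i, ε i * ζ ω i}
      ≤ Real.exp (-(N * (Real.log 3 + 1))) := by
    intro ε
    have hvar_le : ∫ ω, (∑ i, ε i * ζ ω i) ^ 2 ≤ 2 * N * c := by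
      rw [integral_sq_sum_mul fun i ↦ hgauss.memLp i 2]
      refine (sum_sum_mul_mul_le_of_abs_le _ _ (fun i ↦ ?_) hcorr).trans_eq ?_
      · cases ε i <;> norm_num
      · rw [Fintype.card_fin]; field_simp; ring
    refine (hgauss.measureReal_le_sum_mul_le _ hvar_le (by positivity)).trans_eq ?_
    congr 1
    field_simp
    rw [hK]
    ring
  have hcard : (Fintype.card (Fin N → SignType) : ℝ) = Real.exp (N * Real.log 3) := by
    rw [Fintype.card_fun, Fintype.card_fin, show Fintype.card SignType = 3 from rfl,
      Real.exp_nat_mul, Real.exp_log three_pos, Nat.cast_pow, Nat.cast_ofNat]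
  rw [one_mul, div_one, ← ofReal_measureReal]
  gcongr
  calc (ℙ : Measure Ω).real {ω | K ≤ (N : ℝ)⁻¹ * ∑ i, |ζ ω i|}
      = (ℙ : Measure Ω).real {ω | N * K ≤ ∑ i, |ζ ω i|} := by simp_rw [le_inv_mul_iff₀ hN']
    _ ≤ ∑ ε : Fin N → SignType, (ℙ : Measure Ω).real {ω | N * K ≤ ∑ i, ε i * ζ ω i} :=
      measureReal_le_sum_abs_le_sum_signs (fun i ω ↦ ζ ω i) _
    _ ≤ ∑ _ε : Fin N → SignType, Real.exp (-(N * (Real.log 3 + 1))) :=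
      Finset.sum_le_sum fun ε _ ↦ hsign ε
    _ = Real.exp (-N) := by
      rw [Finset.sum_const, Finset.card_univ, nsmul_eq_mul, hcard, ← Real.exp_add]
      ring_nf
end
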